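/- arXiv:2011.04576 — 3 statements merged into one kernel-verified Lean document; each statement's English description precedes it below -/
import Mathlib

section
/- Suppose the hierarchical model decomposition identity x(t) = P₀ξ₀(t) + Σ_{i=1}^N P_i ξ_i(t) holds for all t ≥ 0, all admissible initial conditions satisfying the identity at t = 0, and all inputs, where P₀ has full column rank. Then necessarily Â₀ = P₀† A P₀ and A·P₀ = P₀·Â₀, i.e., the global reduced model matrix is uniquely determined. -/
open Matrix

/-! Feed the decomposition zero inputs, `ξ_i ≡ 0`, `ξ₀(t) = exp(t Â₀) v` and
`x(t) = exp(t A) P₀ v`: the identity says `exp(t A) P₀ v = P₀ exp(t Â₀) v` for `t ≥ 0`.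
Differentiating at `t = 0` from the right gives `A P₀ v = P₀ Â₀ v` for every `v`, i.e.
`A P₀ = P₀ Â₀`, and multiplying on the left by the left inverse `Q` of `P₀` gives
`Â₀ = Q A P₀`. -/

theorem HasDerivAt.eq_of_eqOn_Ici {E : Type*} [NormedAddCommGroup E] [NormedSpace ℝ E]
    {f g : ℝ → E} {f' g' : E} {a : ℝ} (hf : HasDerivAt f f' a) (hg : HasDerivAt g g' a)
    (hfg : Set.EqOn f g (Set.Ici a)) : f' = g' :=
  (uniqueDiffOn_Ici a a Set.self_mem_Ici).eq_deriv _ hf.hasDerivWithinAt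
    (hg.hasDerivWithinAt.congr hfg (hfg Set.self_mem_Ici))

theorem HasDerivAt.matrix_mulVec {ι κ : Type*} [Fintype ι] [Fintype κ] {f : ℝ → κ → ℝ} {f' : κ → ℝ}
    {t : ℝ} (P : Matrix ι κ ℝ) (hf : HasDerivAt f f' t) :
    HasDerivAt (fun s => P *ᵥ f s) (P *ᵥ f') t :=
  P.mulVecLin.toContinuousLinearMap.hasFDerivAt.comp_hasDerivAt t hf

section MatrixExp

variable {ι : Type*} [Fintype ι] [DecidableEq ι]

open NormedSpace

attribute [local instance] Matrix.linftyOpNormedRing Matrix.linftyOpNormedAlgebra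

theorem Matrix.hasDerivAt_exp_smul_mulVec (M : Matrix ι ι ℝ) (c : ι → ℝ) (t : ℝ) :
    HasDerivAt (fun s : ℝ => exp (s • M) *ᵥ c) (M *ᵥ (exp (t • M) *ᵥ c)) t := by
  rw [mulVec_mulVec]
  exact ((mulVecBilin ℝ ℝ).flip c).toContinuousLinearMap.hasFDerivAt.comp_hasDerivAt t
    (hasDerivAt_exp_smul_const' M t)

theorem Matrix.exp_zero_smul_mulVec (M : Matrix ι ι ℝ) (c : ι → ℝ) :
    exp ((0 : ℝ) • M) *ᵥ c = c := by
  rw [zero_smul, exp_zero, one_mulVec]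

theorem Matrix.mul_eq_mul_of_exp_smul_mulVec_eq {κ : Type*} [Fintype κ] [DecidableEq κ]
    (M : Matrix ι ι ℝ) (P : Matrix ι κ ℝ) (M' : Matrix κ κ ℝ)
    (h : ∀ v : κ → ℝ, ∀ t : ℝ, 0 ≤ t → exp (t • M) *ᵥ (P *ᵥ v) = P *ᵥ (exp (t • M') *ᵥ v)) :
    M * P = P * M' := by
  refine ext_iff_mulVec.mpr fun v => ?_
  have hderiv := (hasDerivAt_exp_smul_mulVec M (P *ᵥ v) 0).eq_of_eqOn_Ici
    ((hasDerivAt_exp_smul_mulVec M' v 0).matrix_mulVec P) fun t ht => h v t ht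
  rwa [exp_zero_smul_mulVec, exp_zero_smul_mulVec, mulVec_mulVec, mulVec_mulVec] at hderiv

end MatrixExp

theorem stmt_6_general {n n₀ N m₀ : ℕ} {ni mi : Fin N → ℕ}
    (A : Matrix (Fin n) (Fin n) ℝ) (P₀ : Matrix (Fin n) (Fin n₀) ℝ)
    (P : ∀ i, Matrix (Fin n) (Fin (ni i)) ℝ)
    (B₀ : Matrix (Fin n₀) (Fin m₀) ℝ) (B : ∀ i, Matrix (Fin (ni i)) (Fin (mi i)) ℝ)
    (Ahat₀ : Matrix (Fin n₀) (Fin n₀) ℝ)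
    (Ahat : ∀ i, Matrix (Fin (ni i)) (Fin (ni i)) ℝ)
    (Rhat : ∀ i, Matrix (Fin n₀) (Fin (ni i)) ℝ)
    (Q : Matrix (Fin n₀) (Fin n) ℝ) (hQ : Q * P₀ = 1)
    (hHMD : ∀ (u₀ : ℝ → Fin m₀ → ℝ) (u : ∀ i, ℝ → Fin (mi i) → ℝ),
      Continuous u₀ → (∀ i, Continuous (u i)) →
      ∀ (x : ℝ → Fin n → ℝ) (ξ₀ : ℝ → Fin n₀ → ℝ) (ξ : ∀ i, ℝ → Fin (ni i) → ℝ),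
      (∀ t, HasDerivAt x
        (A *ᵥ x t + P₀ *ᵥ (B₀ *ᵥ u₀ t) + ∑ i, P i *ᵥ (B i *ᵥ u i t)) t) →
      (∀ i t, HasDerivAt (ξ i) (Ahat i *ᵥ ξ i t + B i *ᵥ u i t) t) →
      (∀ t, HasDerivAt ξ₀
        (Ahat₀ *ᵥ ξ₀ t + ∑ i, Rhat i *ᵥ ξ i t + B₀ *ᵥ u₀ t) t) →
      x 0 = P₀ *ᵥ ξ₀ 0 + ∑ i, P i *ᵥ ξ i 0 →
      ∀ t : ℝ, 0 ≤ t → x t = P₀ *ᵥ ξ₀ t + ∑ i, P i *ᵥ ξ i t) :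
    Ahat₀ = Q * A * P₀ ∧ A * P₀ = P₀ * Ahat₀ := by
  have hAP : A * P₀ = P₀ * Ahat₀ := by
    refine mul_eq_mul_of_exp_smul_mulVec_eq A P₀ Ahat₀ fun v t ht => ?_
    simpa using hHMD 0 0 continuous_const (fun _ => continuous_const)
      (fun s => NormedSpace.exp (s • A) *ᵥ (P₀ *ᵥ v)) (fun s => NormedSpace.exp (s • Ahat₀) *ᵥ v)
      0 (fun t => by simpa using hasDerivAt_exp_smul_mulVec A (P₀ *ᵥ v) t)
      (fun _ _ => by simp)
      (fun t => by simpa using hasDerivAt_exp_smul_mulVec Ahat₀ v t)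
      (by simp only [exp_zero_smul_mulVec, Pi.zero_apply, mulVec_zero, Finset.sum_const_zero,
        add_zero]) t ht
  refine ⟨?_, hAP⟩
  calc Ahat₀ = Q * P₀ * Ahat₀ := by rw [hQ, Matrix.one_mul]
    _ = Q * A * P₀ := by rw [Matrix.mul_assoc, ← hAP, Matrix.mul_assoc]

/-- If the hierarchical model decomposition identity holds for all consistent initial
conditions and all inputs, and `P₀` has full column rank (witnessed by a left inverse `Q`,
playing the role of the pseudoinverse `P₀†`), and `im P₀` is `A`-invariant, then
necessarily `Â₀ = P₀† A P₀` and `A P₀ = P₀ Â₀`. -/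
theorem stmt_6 {n n₀ N m₀ : ℕ} {ni mi : Fin N → ℕ}
    (A : Matrix (Fin n) (Fin n) ℝ) (P₀ : Matrix (Fin n) (Fin n₀) ℝ)
    (P : ∀ i, Matrix (Fin n) (Fin (ni i)) ℝ)
    (B₀ : Matrix (Fin n₀) (Fin m₀) ℝ) (B : ∀ i, Matrix (Fin (ni i)) (Fin (mi i)) ℝ)
    (Ahat₀ : Matrix (Fin n₀) (Fin n₀) ℝ)
    (Ahat : ∀ i, Matrix (Fin (ni i)) (Fin (ni i)) ℝ)
    (Rhat : ∀ i, Matrix (Fin n₀) (Fin (ni i)) ℝ)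
    (Q : Matrix (Fin n₀) (Fin n) ℝ) (hQ : Q * P₀ = 1)
    (hinv : ∀ x ∈ LinearMap.range P₀.mulVecLin, A *ᵥ x ∈ LinearMap.range P₀.mulVecLin)
    (hHMD : ∀ (u₀ : ℝ → Fin m₀ → ℝ) (u : ∀ i, ℝ → Fin (mi i) → ℝ),
      Continuous u₀ → (∀ i, Continuous (u i)) →
      ∀ (x : ℝ → Fin n → ℝ) (ξ₀ : ℝ → Fin n₀ → ℝ) (ξ : ∀ i, ℝ → Fin (ni i) → ℝ),
      (∀ t, HasDerivAt x
        (A *ᵥ x t + P₀ *ᵥ (B₀ *ᵥ u₀ t) + ∑ i, P i *ᵥ (B i *ᵥ u i t)) t) →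
      (∀ i t, HasDerivAt (ξ i) (Ahat i *ᵥ ξ i t + B i *ᵥ u i t) t) →
      (∀ t, HasDerivAt ξ₀
        (Ahat₀ *ᵥ ξ₀ t + ∑ i, Rhat i *ᵥ ξ i t + B₀ *ᵥ u₀ t) t) →
      x 0 = P₀ *ᵥ ξ₀ 0 + ∑ i, P i *ᵥ ξ i 0 →
      ∀ t : ℝ, 0 ≤ t → x t = P₀ *ᵥ ξ₀ t + ∑ i, P i *ᵥ ξ i t) :
    Ahat₀ = Q * A * P₀ ∧ A * P₀ = P₀ * Ahat₀ :=
  stmt_6_general A P₀ P B₀ B Ahat₀ Ahat Rhat Q hQ hHMD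
end

section
/- Suppose for each i = 1,…,N: R(A, P_i) ⊆ im P_i + im P₀ and im(π_i P₀) ⊆ R(A, [P_1 ⋯ P_{i−1} P_{i+1} ⋯ P_N]), where π_i = P_iP_iᵀ. Suppose also that the images im P_1, …, im P_N are mutually orthogonal, span ℝ^n, each P_i has orthonormal columns, and im P₀ = ⊕_{i=1}^N im(π_i P₀). Then im P₀ is A-invariant, i.e., R(A, P₀) ⊆ im P₀. -/
/-!
Write `W = im P₀` and `Vᵢ = im Pᵢ`, so that `πᵢ W ⊆ W`, `W = Σᵢ πᵢ W`, `πₖ` kills `Vᵢ` for `k ≠ i`,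
and `Σₖ πₖ = 1`. It suffices to show `A (πᵢ W) ⊆ W`. A vector `x ∈ πᵢ W` lies in `Vᵢ`, so
`A x ∈ R(A, Pᵢ) ⊆ Vᵢ + W`; it also lies in the `A`-invariant subspace `Σ_{j ≠ i} R(A, Pⱼ)`, so
`A x ∈ Σ_{j ≠ i} Vⱼ + W`. The first decomposition gives `πₖ A x ∈ W` for `k ≠ i`, the second
gives `πᵢ A x ∈ W`, and `A x = Σₖ πₖ A x`.
-/

open Matrix

/-- The controllable subspace `R(A,B)`: the smallest `A`-invariant subspace
containing `im B`. -/
noncomputable def ctrlSubspace {n m : ℕ} (A : Matrix (Fin n) (Fin n) ℝ)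
    (B : Matrix (Fin n) (Fin m) ℝ) : Submodule ℝ (Fin n → ℝ) :=
  ⨆ k : ℕ, LinearMap.range ((A ^ k * B).mulVecLin)

namespace Submodule

variable {R V : Type*} [Semiring R] [AddCommMonoid V] [Module R V]

theorem map_iSup_le_iSup_of_map_le {ι : Sort*} {f : Module.End R V} {p : ι → Submodule R V}
    (hp : ∀ i, (p i).map f ≤ p i) : (⨆ i, p i).map f ≤ ⨆ i, p i := by
  rw [map_iSup]
  exact iSup_mono hp

theorem apply_mem_of_mem_sup_of_le_ker {f : Module.End R V} {U W : Submodule R V}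
    (hU : U ≤ LinearMap.ker f) (hW : W.map f ≤ W) {y : V} (hy : y ∈ U ⊔ W) : f y ∈ W := by
  obtain ⟨u, hu, w, hw, rfl⟩ := mem_sup.mp hy
  rw [map_add, LinearMap.mem_ker.mp (hU hu), zero_add]
  exact hW (mem_map_of_mem hw)

theorem mem_of_mem_sup_of_mem_iSup_ne_sup {ι : Type*} [Fintype ι] {π : ι → Module.End R V}
    (hsum : ∑ k, π k = 1) {U : ι → Submodule R V}
    (hker : ∀ j k, j ≠ k → U j ≤ LinearMap.ker (π k)) {W : Submodule R V}
    (hW : ∀ k, W.map (π k) ≤ W) {i : ι} {y : V} (hy : y ∈ U i ⊔ W)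
    (hy' : y ∈ (⨆ j, ⨆ _ : j ≠ i, U j) ⊔ W) : y ∈ W := by
  have hdecomp : y = ∑ k, π k y := by
    rw [← LinearMap.sum_apply, hsum, Module.End.one_apply]
  rw [hdecomp]
  refine sum_mem fun k _ => ?_
  by_cases hk : k = i
  · subst hk
    exact apply_mem_of_mem_sup_of_le_ker (iSup₂_le fun j hj => hker j k hj) (hW k) hy'
  · exact apply_mem_of_mem_sup_of_le_ker (hker i k (Ne.symm hk)) (hW k) hy

end Submodule

namespace Matrix

variable {R l m n : Type*} [CommRing R] [Fintype m] [Fintype n]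

theorem range_mulVecLin_mul (M : Matrix l m R) (B : Matrix m n R) :
    LinearMap.range (M * B).mulVecLin = (LinearMap.range B.mulVecLin).map M.mulVecLin := by
  rw [mulVecLin_mul, LinearMap.range_comp]

theorem range_mulVecLin_mul_le (M : Matrix l m R) (B : Matrix m n R) :
    LinearMap.range (M * B).mulVecLin ≤ LinearMap.range M.mulVecLin := by
  rw [mulVecLin_mul]
  exact LinearMap.range_comp_le_range _ _

theorem range_mulVecLin_le_ker_of_mul_eq_zero {M : Matrix l m R} {B : Matrix m n R}
    (h : M * B = 0) : LinearMap.range B.mulVecLin ≤ LinearMap.ker M.mulVecLin := by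
  rintro _ ⟨u, rfl⟩
  rw [LinearMap.mem_ker, mulVecLin_apply, mulVecLin_apply, mulVec_mulVec, h, zero_mulVec]

theorem sum_mulVecLin_mul_transpose_eq_one {ι : Type*} [Fintype ι] {ni : ι → Type*}
    [∀ i, Fintype (ni i)] [∀ i, DecidableEq (ni i)] {P : ∀ i, Matrix m (ni i) R}
    (horthonormal : ∀ i, (P i)ᵀ * P i = 1) (hmutual : ∀ i j, i ≠ j → (P i)ᵀ * P j = 0)
    (hspan : ⨆ i, LinearMap.range (P i).mulVecLin = ⊤) :
    ∑ k, (P k * (P k)ᵀ).mulVecLin = 1 := by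
  refine LinearMap.eqLocus_eq_top.mp (eq_top_iff.mpr (hspan ▸ iSup_le fun j => ?_))
  rintro _ ⟨u, rfl⟩
  rw [LinearMap.mem_eqLocus, LinearMap.sum_apply, Module.End.one_apply,
    Finset.sum_eq_single_of_mem j (Finset.mem_univ j)]
  · simp only [mulVecLin_apply, mulVec_mulVec, Matrix.mul_assoc, horthonormal, Matrix.mul_one]
  · intro k _ hk
    simp only [mulVecLin_apply, mulVec_mulVec, Matrix.mul_assoc, hmutual k j hk, Matrix.mul_zero,
      zero_mulVec]

theorem mem_of_mem_sup_of_mem_iSup_ne_sup {ι : Type*} [Fintype ι] {ni : ι → Type*}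
    [∀ i, Fintype (ni i)] [∀ i, DecidableEq (ni i)] {P : ∀ i, Matrix m (ni i) R}
    (horthonormal : ∀ i, (P i)ᵀ * P i = 1) (hmutual : ∀ i j, i ≠ j → (P i)ᵀ * P j = 0)
    (hspan : ⨆ i, LinearMap.range (P i).mulVecLin = ⊤) {W : Submodule R (m → R)}
    (hW : ∀ k, W.map (P k * (P k)ᵀ).mulVecLin ≤ W) {i : ι} {y : m → R}
    (hy : y ∈ LinearMap.range (P i).mulVecLin ⊔ W)
    (hy' : y ∈ (⨆ j, ⨆ _ : j ≠ i, LinearMap.range (P j).mulVecLin) ⊔ W) : y ∈ W := by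
  have hker : ∀ j k, j ≠ k →
      LinearMap.range (P j).mulVecLin ≤ LinearMap.ker (P k * (P k)ᵀ).mulVecLin :=
    fun j k hjk => range_mulVecLin_le_ker_of_mul_eq_zero <| by
      rw [Matrix.mul_assoc, hmutual k j hjk.symm, Matrix.mul_zero]
  exact Submodule.mem_of_mem_sup_of_mem_iSup_ne_sup
    (sum_mulVecLin_mul_transpose_eq_one horthonormal hmutual hspan) hker hW hy hy'

end Matrix

section ctrlSubspace

open LinearMap (range)

variable {n m : ℕ} (A : Matrix (Fin n) (Fin n) ℝ) (B : Matrix (Fin n) (Fin m) ℝ)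

theorem range_le_ctrlSubspace : range B.mulVecLin ≤ ctrlSubspace A B :=
  le_iSup_of_le 0 (by rw [pow_zero, Matrix.one_mul])

theorem map_ctrlSubspace_le : (ctrlSubspace A B).map A.mulVecLin ≤ ctrlSubspace A B := by
  rw [ctrlSubspace, Submodule.map_iSup]
  refine iSup_le fun k => le_iSup_of_le (k + 1) ?_
  rw [← range_mulVecLin_mul, ← Matrix.mul_assoc, ← pow_succ']

theorem ctrlSubspace_le_of_map_le {W : Submodule ℝ (Fin n → ℝ)} (hB : range B.mulVecLin ≤ W)
    (hW : W.map A.mulVecLin ≤ W) : ctrlSubspace A B ≤ W := by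
  refine iSup_le fun k => ?_
  induction k with
  | zero => rwa [pow_zero, Matrix.one_mul]
  | succ k ih =>
    rw [pow_succ', Matrix.mul_assoc, range_mulVecLin_mul]
    exact (Submodule.map_mono ih).trans hW

end ctrlSubspace

/-- Proposition 4: if `R(A,P_i) ⊆ im P_i + im P₀` for all `i` and each
`im (π_i P₀)` is reachable from the other clusters, where the `P_i` have orthonormal
columns with mutually orthogonal images spanning `ℝⁿ` and
`im P₀ = ⊕_i im (π_i P₀)`, then `im P₀` is `A`-invariant: `R(A,P₀) ⊆ im P₀`. -/
theorem stmt_10 {n n₀ N : ℕ} {ni : Fin N → ℕ}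
    (A : Matrix (Fin n) (Fin n) ℝ) (P₀ : Matrix (Fin n) (Fin n₀) ℝ)
    (P : ∀ i, Matrix (Fin n) (Fin (ni i)) ℝ)
    (horthonormal : ∀ i, (P i)ᵀ * P i = 1)
    (hmutual : ∀ i j, i ≠ j → (P i)ᵀ * P j = 0)
    (hspan : (⨆ i, LinearMap.range (P i).mulVecLin) = ⊤)
    (hP₀ : LinearMap.range P₀.mulVecLin =
      ⨆ i, LinearMap.range ((P i * (P i)ᵀ * P₀).mulVecLin))
    (h11a : ∀ i, ctrlSubspace A (P i) ≤
      LinearMap.range (P i).mulVecLin ⊔ LinearMap.range P₀.mulVecLin)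
    (h12 : ∀ i, LinearMap.range ((P i * (P i)ᵀ * P₀).mulVecLin) ≤
      ⨆ j, ⨆ _ : j ≠ i, ctrlSubspace A (P j)) :
    ctrlSubspace A P₀ ≤ LinearMap.range P₀.mulVecLin := by
  have hπ : ∀ k, (LinearMap.range P₀.mulVecLin).map (P k * (P k)ᵀ).mulVecLin ≤
      LinearMap.range P₀.mulVecLin := fun k => by
      rw [← range_mulVecLin_mul, hP₀]
      exact le_iSup (fun i => LinearMap.range (P i * (P i)ᵀ * P₀).mulVecLin) k
  have hA : (LinearMap.range P₀.mulVecLin).map A.mulVecLin ≤ LinearMap.range P₀.mulVecLin := by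
    nth_rw 1 [hP₀]
    refine (Submodule.map_iSup _ _).trans_le (iSup_le fun i => ?_)
    rintro _ ⟨x, hx, rfl⟩
    have hxi : x ∈ ctrlSubspace A (P i) := by
      rw [Matrix.mul_assoc] at hx
      exact range_le_ctrlSubspace A (P i) (range_mulVecLin_mul_le _ _ hx)
    have hAx : A.mulVecLin x ∈ ⨆ j, ⨆ _ : j ≠ i, ctrlSubspace A (P j) :=
      Submodule.map_iSup_le_iSup_of_map_le (fun j => Submodule.map_iSup_le_iSup_of_map_le
        fun _ => map_ctrlSubspace_le A (P j)) (Submodule.mem_map_of_mem (h12 i hx))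
    have hle : (⨆ j, ⨆ _ : j ≠ i, ctrlSubspace A (P j)) ≤
        (⨆ j, ⨆ _ : j ≠ i, LinearMap.range (P j).mulVecLin) ⊔ LinearMap.range P₀.mulVecLin :=
      iSup₂_le fun j hj => (h11a j).trans (sup_le_sup_right
        (le_iSup₂ (f := fun j (_ : j ≠ i) => LinearMap.range (P j).mulVecLin) j hj) _)
    exact mem_of_mem_sup_of_mem_iSup_ne_sup horthonormal hmutual hspan hπ
      (h11a i (map_ctrlSubspace_le A (P i) (Submodule.mem_map_of_mem hxi))) (hle hAx)
  exact ctrlSubspace_le_of_map_le A P₀ le_rfl hA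
end

section
/- For the second-order network system ẋ = Ax with A the block matrix arising from m_k θ̈_k + d_k θ̇_k + Σ_{l∈N_k} α_{kl}(θ_k − θ_l) = 0, if the parameters (m_k, d_k) are identical within each cluster and the interconnection Laplacian is equitable with respect to the cluster partition (each node in cluster i has the same total coupling weight to each cluster j), then the synchronization subspace im P₀ (vectors constant within each cluster, in both θ and ω coordinates) is A-invariant. -/
/-!
Write a cluster-constant `θ` as `Θ ∘ c`. Then `Σ_l L_{kl} θ_l = Σ_j Θ_j Σ_{l ∈ I_j} L_{kl}`, and by
equitability the inner sums depend only on the cluster of `k`. Together with the cluster-wise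
equality of `m` and `d`, both components of `A (θ, ω)` are again constant on clusters.
-/

open Finset

section Equitable

variable {ι κ R : Type*} [Fintype ι] [Fintype κ] [DecidableEq κ] [CommSemiring R]

theorem sum_mul_comp_eq_sum_mul_sum_fiber (c : ι → κ) (a : ι → R) (Θ : κ → R) :
    ∑ l, a l * Θ (c l) = ∑ j, Θ j * ∑ l, if c l = j then a l else 0 := by
  simp_rw [mul_sum, mul_ite, mul_zero]
  rw [sum_comm]
  simp [mul_comm]

theorem sum_mul_eq_of_equitable (c : ι → κ) (L : Matrix ι ι R)
    (hequit : ∀ (j : κ) (k k' : ι), c k = c k' →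
      (∑ l, if c l = j then L k l else 0) = ∑ l, if c l = j then L k' l else 0)
    {θ : ι → R} (hθ : Function.FactorsThrough θ c) {k k' : ι} (hc : c k = c k') :
    ∑ l, L k l * θ l = ∑ l, L k' l * θ l := by
  obtain ⟨Θ, rfl⟩ : ∃ Θ : κ → R, θ = Θ ∘ c := ⟨_, (hθ.extend_comp fun _ ↦ 0).symm⟩
  simp only [Function.comp_apply, sum_mul_comp_eq_sum_mul_sum_fiber, hequit _ k k' hc]

end Equitable

theorem stmt_19_general {N₀ N : ℕ} (c : Fin N₀ → Fin N) (m d : Fin N₀ → ℝ)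
    (L : Matrix (Fin N₀) (Fin N₀) ℝ)
    (hpar : ∀ k k', c k = c k' → m k = m k' ∧ d k = d k')
    (hequit : ∀ (j : Fin N) (k k' : Fin N₀), c k = c k' →
      (∑ l, if c l = j then L k l else 0) = ∑ l, if c l = j then L k' l else 0) :
    ∀ θ ω : Fin N₀ → ℝ,
      (∀ k k', c k = c k' → θ k = θ k') →
      (∀ k k', c k = c k' → ω k = ω k') →
      (∀ k k', c k = c k' → ω k = ω k') ∧
      (∀ k k', c k = c k' →
        -(d k / m k) * ω k - (1 / m k) * ∑ l, L k l * θ l =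
          -(d k' / m k') * ω k' - (1 / m k') * ∑ l, L k' l * θ l) := by
  intro θ ω hθ hω
  refine ⟨hω, fun k k' hc => ?_⟩
  obtain ⟨hm, hd⟩ := hpar k k' hc
  rw [sum_mul_eq_of_equitable c L hequit hθ hc, hm, hd, hω k k' hc]

/-- For the second-order network system `θ̇_k = ω_k`,
`ω̇_k = −(d_k/m_k) ω_k − (1/m_k) Σ_l L_{kl} θ_l`, if the parameters `(m_k, d_k)` are
identical within each cluster and the Laplacian is equitable with respect to the
cluster partition, then the synchronization subspace (vectors `(θ, ω)` constant within
each cluster in both coordinates) is invariant under the dynamics matrix. -/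
theorem stmt_19 {N₀ N : ℕ} (c : Fin N₀ → Fin N) (m d : Fin N₀ → ℝ)
    (L : Matrix (Fin N₀) (Fin N₀) ℝ)
    (hm : ∀ k, m k ≠ 0)
    (hpar : ∀ k k', c k = c k' → m k = m k' ∧ d k = d k')
    (hequit : ∀ (j : Fin N) (k k' : Fin N₀), c k = c k' →
      (∑ l, if c l = j then L k l else 0) = ∑ l, if c l = j then L k' l else 0) :
    ∀ θ ω : Fin N₀ → ℝ,
      (∀ k k', c k = c k' → θ k = θ k') →
      (∀ k k', c k = c k' → ω k = ω k') →
      (∀ k k', c k = c k' → ω k = ω k') ∧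
      (∀ k k', c k = c k' →
        -(d k / m k) * ω k - (1 / m k) * ∑ l, L k l * θ l =
          -(d k' / m k') * ω k' - (1 / m k') * ∑ l, L k' l * θ l) :=
  stmt_19_general c m d L hpar hequit
end
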